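/- Let q be an odd prime power with q ≡ 1 (mod 3), let f ∈ 𝔽_q[T] be monic of degree n ≥ 1, and let m ≥ 1 be an integer. If 3 ∣ n, then Σ_{h ∈ M_{q,m}} χ_f(h) = (q^m/|f|_q)·[ G_q(0,f) + (q−1)·Σ_{V ∈ M_{q,≤n−m−2}} G_q(V,f) − Σ_{V ∈ M_{q,n−m−1}} G_q(V,f) ]. If 3 ∤ n, then Σ_{h ∈ M_{q,m}} χ_f(h) = (q^{m+1/2}/|f|_q) · conj(ε(χ_f)) · Σ_{V ∈ M_{q,n−m−1}} G_q(V,f), where conj denotes complex conjugation (sums over M_{q,k} and M_{q,≤k} with k < 0 are empty). -/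

import Mathlib

/-!
Since `χ_f` depends only on `h mod f`, Fourier inversion on `𝔽_q[T]/(f)` for the additive
character `g ↦ e_q(g/f)` gives `q^{deg f} χ_f(h) = Σ_V e_q(hV/f) G_q(V,f)` (using `χ_f(-1) = 1`,
as `-1` is a cube). Summed over monic `h` of degree `m`, the inner sum `Σ_h e_q(hV/f)` equals
`q^m e_q(V_{n-m-1})` when `deg V < n - m` and vanishes otherwise. Writing `V = cV'` with
`c ∈ 𝔽_q^×` and `V'` monic, `G_q(cV',f) = χ_f(c⁻¹) G_q(V',f)`, so only the sums
`Σ_c χ_f(c⁻¹)` and `Σ_c e_q(c) χ_f(c⁻¹)` remain. On constants `χ_f(c) = ω^{k deg f}`, where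
`ω = e^{2πi/3}` and `c^{(q-1)/3} = ζ^k`: for `3 ∣ n` the character is trivial there and the
sums are `q - 1` and `-1`; for `3 ∤ n` it is not, so `G_q(0,f)` and the first sum vanish and the
second is `conj τ(χ_f)`.
-/

open scoped Classical
open Polynomial

namespace CubicLF

lemma finite_degreeLT (Fq : Type) [Field Fq] [Fintype Fq] (n : ℕ) :
    {f : Polynomial Fq | f.degree < (n : ℕ)}.Finite := by
  haveI : Finite (Polynomial.degreeLT Fq n) :=
    Finite.of_equiv _ (Polynomial.degreeLTEquiv Fq n).toEquiv.symm
  have h1 : {f : Polynomial Fq | f.degree < (n : ℕ)} =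
      (Polynomial.degreeLT Fq n : Set (Polynomial Fq)) := by
    ext f
    simp [Polynomial.mem_degreeLT]
  rw [h1]
  exact Set.toFinite _

/-- The residues modulo `h`: all polynomials of degree smaller than `deg h`. -/
noncomputable def residues (Fq : Type) [Field Fq] [Fintype Fq] (h : Polynomial Fq) :
    Finset (Polynomial Fq) :=
  (finite_degreeLT Fq h.natDegree).toFinset

lemma finite_monicDeg (Fq : Type) [Field Fq] [Fintype Fq] (n : ℕ) :
    {f : Polynomial Fq | f.Monic ∧ f.natDegree = n}.Finite := by
  apply (finite_degreeLT Fq (n + 1)).subset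
  rintro f ⟨hm, rfl⟩
  simp only [Set.mem_setOf_eq]
  rw [Polynomial.degree_eq_natDegree hm.ne_zero]
  exact_mod_cast Nat.lt_succ_self _

/-- The monic polynomials of degree `n`, as a finite set. -/
noncomputable def Mdeg (Fq : Type) [Field Fq] [Fintype Fq] (n : ℕ) : Finset (Polynomial Fq) :=
  (finite_monicDeg Fq n).toFinset

lemma finite_monicDegLE (Fq : Type) [Field Fq] [Fintype Fq] (n : ℕ) :
    {f : Polynomial Fq | f.Monic ∧ f.natDegree ≤ n}.Finite := by
  apply (finite_degreeLT Fq (n + 1)).subset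
  rintro f ⟨hm, hle⟩
  simp only [Set.mem_setOf_eq]
  rw [Polynomial.degree_eq_natDegree hm.ne_zero]
  exact_mod_cast Nat.lt_succ_of_le hle

/-- The monic polynomials of degree at most `n`, as a finite set. -/
noncomputable def MdegLE (Fq : Type) [Field Fq] [Fintype Fq] (n : ℕ) : Finset (Polynomial Fq) :=
  (finite_monicDegLE Fq n).toFinset

/-- The monic polynomials of degree `k` for an integer `k` (empty for `k < 0`). -/
noncomputable def MdegZ (Fq : Type) [Field Fq] [Fintype Fq] (k : ℤ) : Finset (Polynomial Fq) :=
  if 0 ≤ k then Mdeg Fq k.toNat else ∅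

/-- The monic polynomials of degree at most `k`, for an integer `k` (empty for `k < 0`). -/
noncomputable def MdegLEZ (Fq : Type) [Field Fq] [Fintype Fq] (k : ℤ) : Finset (Polynomial Fq) :=
  if 0 ≤ k then MdegLE Fq k.toNat else ∅

lemma finite_sqfMonicDeg (Fq : Type) [Field Fq] [Fintype Fq] (n : ℕ) :
    {f : Polynomial Fq | f.Monic ∧ Squarefree f ∧ f.natDegree = n}.Finite :=
  (finite_monicDeg Fq n).subset (by rintro f ⟨h1, _, h3⟩; exact ⟨h1, h3⟩)

/-- The monic squarefree polynomials of degree `n`, as a finite set. -/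
noncomputable def Hdeg (Fq : Type) [Field Fq] [Fintype Fq] (n : ℕ) : Finset (Polynomial Fq) :=
  (finite_sqfMonicDeg Fq n).toFinset

lemma finite_primeDiv (Fq : Type) [Field Fq] [Fintype Fq] (f : Polynomial Fq) (hf : f ≠ 0) :
    {P : Polynomial Fq | P.Monic ∧ Irreducible P ∧ P ∣ f}.Finite := by
  apply (finite_monicDegLE Fq f.natDegree).subset
  rintro P ⟨h1, _, h3⟩
  exact ⟨h1, Polynomial.natDegree_le_of_dvd h3 hf⟩

/-- The monic irreducible divisors of `f`, as a finite set. -/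
noncomputable def primeDiv (Fq : Type) [Field Fq] [Fintype Fq] (f : Polynomial Fq) :
    Finset (Polynomial Fq) :=
  if hf : f = 0 then ∅ else (finite_primeDiv Fq f hf).toFinset

lemma finite_monicDvd (Fq : Type) [Field Fq] [Fintype Fq] (f : Polynomial Fq) (hf : f ≠ 0) :
    {a : Polynomial Fq | a.Monic ∧ a ∣ f}.Finite := by
  apply (finite_monicDegLE Fq f.natDegree).subset
  rintro a ⟨h1, h2⟩
  exact ⟨h1, Polynomial.natDegree_le_of_dvd h2 hf⟩

/-- The monic divisors of `f`, as a finite set. -/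
noncomputable def monicDvd (Fq : Type) [Field Fq] [Fintype Fq] (f : Polynomial Fq) :
    Finset (Polynomial Fq) :=
  if hf : f = 0 then ∅ else (finite_monicDvd Fq f hf).toFinset

/-- The Möbius function of 𝔽_q[T]. -/
noncomputable def muP (Fq : Type) [Field Fq] [Fintype Fq] (f : Polynomial Fq) : ℤ :=
  if Squarefree f then (-1) ^ (primeDiv Fq f).card else 0

/-- The Euler phi function of 𝔽_q[T]. -/
noncomputable def phiPoly (Fq : Type) [Field Fq] (f : Polynomial Fq) : ℕ :=
  Nat.card ((Polynomial Fq ⧸ Ideal.span {f})ˣ)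

/-- The monic gcd of two polynomials. -/
noncomputable def mgcd (Fq : Type) [Field Fq] (a b : Polynomial Fq) : Polynomial Fq :=
  Polynomial.C ((EuclideanDomain.gcd a b).leadingCoeff)⁻¹ * EuclideanDomain.gcd a b

/-- A Dirichlet character of 𝔽_q[T]: a homomorphism `(𝔽_q[T]/(m))^× → ℂ^×` extended to
`𝔽_q[T]` by periodicity on elements coprime to `m` and by `0` on the others. -/
structure DChar (Fq : Type) [Field Fq] where
  modulus : Polynomial Fq
  monic_modulus : modulus.Monic
  toFun : Polynomial Fq → ℂ
  map_one : toFun 1 = 1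
  map_mul : ∀ a b : Polynomial Fq, toFun (a * b) = toFun a * toFun b
  periodic : ∀ a b : Polynomial Fq, modulus ∣ a - b → toFun a = toFun b
  eq_zero_iff : ∀ a : Polynomial Fq, toFun a = 0 ↔ ¬ IsCoprime a modulus

/-- `h` is a (monic) period of the Dirichlet character `χ`. -/
def IsPeriod {Fq : Type} [Field Fq] (χ : DChar Fq) (h : Polynomial Fq) : Prop :=
  h.Monic ∧ ∀ a b : Polynomial Fq, IsCoprime a χ.modulus → IsCoprime b χ.modulus →
    h ∣ a - b → χ.toFun a = χ.toFun b

/-- A Dirichlet character is primitive when its conductor (the monic period of smallest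
degree) is its modulus. -/
def IsPrimitiveChar {Fq : Type} [Field Fq] (χ : DChar Fq) : Prop :=
  ∀ h : Polynomial Fq, IsPeriod χ h → χ.modulus.natDegree ≤ h.natDegree

/-- A Dirichlet character is cubic when `χ³` is principal but `χ` is not. -/
def IsCubicChar {Fq : Type} [Field Fq] (χ : DChar Fq) : Prop :=
  (∀ a : Polynomial Fq, IsCoprime a χ.modulus → χ.toFun a ^ 3 = 1) ∧
    ¬ ∀ a : Polynomial Fq, IsCoprime a χ.modulus → χ.toFun a = 1

/-- A Dirichlet character is even when it is trivial on the constants 𝔽_q^×. -/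
def IsEvenChar {Fq : Type} [Field Fq] (χ : DChar Fq) : Prop :=
  ∀ c : Fq, c ≠ 0 → χ.toFun (Polynomial.C c) = 1

/-- A Dirichlet character is odd when it is not even. -/
def IsOddChar {Fq : Type} [Field Fq] (χ : DChar Fq) : Prop := ¬ IsEvenChar χ

/-- The genus of a Dirichlet character of conductor `h`:  `deg h - 2` if even,
`deg h - 1` if odd. -/
noncomputable def genus {Fq : Type} [Field Fq] (χ : DChar Fq) : ℕ :=
  if IsEvenChar χ then χ.modulus.natDegree - 2 else χ.modulus.natDegree - 1

/-- The central value `L_q(1/2,χ) = Σ_{f ∈ M_{q, ≤ deg h - 1}} χ(f) q^{-deg f/2}`. -/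
noncomputable def Lhalf (Fq : Type) [Field Fq] [Fintype Fq] (χ : DChar Fq) : ℂ :=
  ∑ f ∈ MdegLE Fq (χ.modulus.natDegree - 1),
    χ.toFun f / (Real.sqrt (Fintype.card Fq : ℝ) : ℂ) ^ f.natDegree

/-- The zeta function `ζ_q(s) = (1 - q^{1-s})⁻¹`. -/
noncomputable def zetaQ (Fq : Type) [Fintype Fq] (s : ℝ) : ℝ :=
  (1 - (Fintype.card Fq : ℝ) ^ ((1 : ℝ) - s))⁻¹

/-- The primitive cube root of unity `e^{2πi/3}` in ℂ. -/
noncomputable def omega3 : ℂ := Complex.exp (2 * Real.pi * Complex.I / 3)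

/-- The cubic character `χ₃` of 𝔽_q^×, relative to the choice `ζ = Ω(e^{2πi/3})` of a
primitive cube root of unity of 𝔽_q:  `χ₃(α) = Ω⁻¹(α^{(q-1)/3})`. -/
noncomputable def chi3 (Fq : Type) [Field Fq] [Fintype Fq] (ζ : Fq) (α : Fq) : ℂ :=
  if α ^ ((Fintype.card Fq - 1) / 3) = 1 then 1
  else if α ^ ((Fintype.card Fq - 1) / 3) = ζ then omega3
  else omega3 ^ 2

/-- The cubic residue symbol `χ_P` for `P` a monic irreducible polynomial, relative to the
choice `ζ = Ω(e^{2πi/3})` of a primitive cube root of unity of 𝔽_q. -/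
noncomputable def cubicSymP (Fq : Type) [Field Fq] [Fintype Fq] (ζ : Fq) (P a : Polynomial Fq) :
    ℂ :=
  if P ∣ a then 0
  else if P ∣ (a ^ ((Fintype.card Fq ^ P.natDegree - 1) / 3) - 1) then 1
  else if P ∣ (a ^ ((Fintype.card Fq ^ P.natDegree - 1) / 3) - Polynomial.C ζ) then omega3
  else omega3 ^ 2

/-- The cubic residue symbol `χ_F = Π χ_{P_i}^{e_i}` for `F = Π P_i^{e_i}` monic. -/
noncomputable def cubicSym (Fq : Type) [Field Fq] [Fintype Fq] (ζ : Fq) (F a : Polynomial Fq) :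
    ℂ :=
  ((UniqueFactorizationMonoid.normalizedFactors F).map (fun P => cubicSymP Fq ζ P a)).prod

/-- The standard additive character `x ↦ exp(2πi Tr_{𝔽_q/𝔽_p}(x)/p)` of 𝔽_q. -/
noncomputable def stdChar (Fq : Type) [Field Fq] [Fintype Fq] (p : ℕ) [Algebra (ZMod p) Fq]
    (x : Fq) : ℂ :=
  Complex.exp (2 * Real.pi * Complex.I * ((Algebra.trace (ZMod p) Fq x).val : ℂ) / p)

/-- `e_q(g/h)`, i.e. the standard additive character evaluated at the coefficient of `T⁻¹`
in the expansion of `g/h` in `𝔽_q((1/T))`; this coefficient equals the coefficient of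
`T^{deg h - 1}` in `g mod h`. -/
noncomputable def eqF (Fq : Type) [Field Fq] [Fintype Fq] (p : ℕ) [Algebra (ZMod p) Fq]
    (g h : Polynomial Fq) : ℂ :=
  stdChar Fq p ((g %ₘ h).coeff (h.natDegree - 1))

/-- The generalized cubic Gauss sum `G_q(V,f) = Σ_{u mod f} χ_f(u) e_q(uV/f)`. -/
noncomputable def Gq (Fq : Type) [Field Fq] [Fintype Fq] (ζ : Fq) (p : ℕ) [Algebra (ZMod p) Fq]
    (V f : Polynomial Fq) : ℂ :=
  ∑ u ∈ residues Fq f, cubicSym Fq ζ f u * eqF Fq p (u * V) f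

/-- The Gauss sum `G(χ) = Σ_{a mod h} χ(a) e_q(a/h)` of a Dirichlet character of modulus `h`. -/
noncomputable def bigGauss (Fq : Type) [Field Fq] [Fintype Fq] (p : ℕ) [Algebra (ZMod p) Fq]
    (χ : DChar Fq) : ℂ :=
  ∑ a ∈ residues Fq χ.modulus, χ.toFun a * eqF Fq p a χ.modulus

/-- `τ(χ) = Σ_{c ∈ 𝔽_q^×} χ(c) exp(2πi Tr(c)/p)`, the Gauss sum of the restriction of a
Dirichlet character to the constants. -/
noncomputable def tauD (Fq : Type) [Field Fq] [Fintype Fq] (p : ℕ) [Algebra (ZMod p) Fq]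
    (χ : DChar Fq) : ℂ :=
  ∑ c : Fqˣ, χ.toFun (Polynomial.C (c : Fq)) * stdChar Fq p (c : Fq)

/-- `τ(χ₃) = Σ_{c ∈ 𝔽_q^×} χ₃(c) exp(2πi Tr(c)/p)`. -/
noncomputable def tauChi3 (Fq : Type) [Field Fq] [Fintype Fq] (ζ : Fq) (p : ℕ)
    [Algebra (ZMod p) Fq] : ℂ :=
  ∑ c : Fqˣ, chi3 Fq ζ (c : Fq) * stdChar Fq p (c : Fq)

/-- The generating series `Ψ_q(f,X) = Σ_{F monic} G_q(f,F) X^{deg F}` as a formal power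
series. -/
noncomputable def PsiS (Fq : Type) [Field Fq] [Fintype Fq] (ζ : Fq) (p : ℕ)
    [Algebra (ZMod p) Fq] (f : Polynomial Fq) : PowerSeries ℂ :=
  PowerSeries.mk fun n => ∑ F ∈ Mdeg Fq n, Gq Fq ζ p f F

/-- The generating series `Ψ̃_q(f,X) = Σ_{F monic, (F,f)=1} G_q(f,F) X^{deg F}` as a formal
power series. -/
noncomputable def PsiTildeS (Fq : Type) [Field Fq] [Fintype Fq] (ζ : Fq) (p : ℕ)
    [Algebra (ZMod p) Fq] (f : Polynomial Fq) : PowerSeries ℂ :=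
  PowerSeries.mk fun n => ∑ F ∈ Mdeg Fq n, if IsCoprime F f then Gq Fq ζ p f F else 0



open Finset

theorem three_dvd_pow_sub_one {q : ℕ} (hq3 : q % 3 = 1) (d : ℕ) : 3 ∣ q ^ d - 1 := by
  have h1 : q ^ d % 3 = 1 := by simp [Nat.pow_mod, hq3]
  omega

theorem dvd_sub_iff_eq_modByMonic {R : Type*} [CommRing R] [Nontrivial R] {f h u : R[X]}
    (hf : f.Monic) (hu : u.degree < f.degree) : f ∣ h - u ↔ u = h %ₘ f := by
  constructor
  · intro hd
    rw [modByMonic_eq_of_dvd_sub hf hd, (modByMonic_eq_self_iff hf).2 hu]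
  · rintro rfl
    exact ⟨h /ₘ f, by linear_combination -(modByMonic_add_div h f)⟩

variable {Fq : Type} [Field Fq]

section PolynomialFinsets

variable [Fintype Fq]

variable (Fq) in
noncomputable def degLT (k : ℕ) : Finset Fq[X] := (finite_degreeLT Fq k).toFinset

theorem mem_degLT {k : ℕ} {g : Fq[X]} : g ∈ degLT Fq k ↔ g ∈ degreeLT Fq k := by
  simp [degLT, mem_degreeLT]

theorem residues_eq_degLT (f : Fq[X]) : residues Fq f = degLT Fq f.natDegree := rfl

theorem card_degLT (k : ℕ) : (degLT Fq k).card = Fintype.card Fq ^ k := by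
  have hset : {g : Fq[X] | g.degree < k} = (degreeLT Fq k : Set Fq[X]) := by
    ext; simp [mem_degreeLT]
  rw [degLT, ← Nat.card_eq_card_finite_toFinset, hset]
  exact (Nat.card_congr (degreeLTEquiv Fq k).toEquiv).trans (by simp)

@[simp]
theorem mem_Mdeg {d : ℕ} {h : Fq[X]} : h ∈ Mdeg Fq d ↔ h.Monic ∧ h.natDegree = d := by
  simp [Mdeg]

@[simp]
theorem mem_MdegLE {d : ℕ} {h : Fq[X]} : h ∈ MdegLE Fq d ↔ h.Monic ∧ h.natDegree ≤ d := by
  simp [MdegLE]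

theorem X_pow_add_mem_Mdeg_iff {m : ℕ} {g : Fq[X]} : X ^ m + g ∈ Mdeg Fq m ↔ g ∈ degLT Fq m := by
  rw [mem_Mdeg, mem_degLT, mem_degreeLT]
  constructor
  · rintro ⟨hmon, hdeg⟩
    have hlt := degree_sub_lt_left (p := X ^ m + g) (q := X ^ m)
      (by rw [degree_eq_natDegree hmon.ne_zero, hdeg, degree_X_pow]) hmon.ne_zero
      (by rw [hmon.leadingCoeff, leadingCoeff_X_pow])
    rwa [add_sub_cancel_left, degree_eq_natDegree hmon.ne_zero, hdeg] at hlt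
  · intro hg
    have hg' : g.degree < (X ^ m : Fq[X]).degree := by rwa [degree_X_pow]
    exact ⟨monic_X_pow_add hg, natDegree_eq_of_degree_eq_some
      (by rw [degree_add_eq_left_of_degree_lt hg', degree_X_pow])⟩

theorem sum_Mdeg {M : Type*} [AddCommMonoid M] (m : ℕ) (F : Fq[X] → M) :
    ∑ h ∈ Mdeg Fq m, F h = ∑ g ∈ degLT Fq m, F (X ^ m + g) :=
  (sum_equiv (Equiv.addLeft (X ^ m)) (fun _ => X_pow_add_mem_Mdeg_iff.symm)
    fun _ _ => rfl).symm

theorem card_Mdeg (m : ℕ) : (Mdeg Fq m).card = Fintype.card Fq ^ m := by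
  simpa [card_degLT] using sum_Mdeg (Fq := Fq) m fun _ => (1 : ℕ)

theorem sum_MdegLEZ {M : Type*} [AddCommMonoid M] (k : ℤ) (F : Fq[X] → M) :
    ∑ V ∈ MdegLEZ Fq k, F V = ∑ d ∈ range (k + 1).toNat, ∑ V ∈ Mdeg Fq d, F V := by
  rw [MdegLEZ]
  split_ifs with hk
  · rw [← sum_fiberwise_of_maps_to (g := natDegree) (t := range (k + 1).toNat)
      fun V hV => by simp only [mem_MdegLE, mem_range] at hV ⊢; omega]
    refine sum_congr rfl fun d hd => sum_congr ?_ fun _ _ => rfl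
    ext V
    simp only [mem_range] at hd
    simp only [mem_filter, mem_MdegLE, mem_Mdeg]
    exact ⟨fun h => ⟨h.1.1, h.2⟩, fun h => ⟨⟨h.1, by omega⟩, h.2⟩⟩
  · simp [show (k + 1).toNat = 0 by omega]

theorem sum_degLT {M : Type*} [AddCommMonoid M] (k : ℕ) (T : Fq[X] → M) :
    ∑ V ∈ degLT Fq k, T V =
      T 0 + ∑ d ∈ range k, ∑ c : Fqˣ, ∑ V ∈ Mdeg Fq d, T (C (c : Fq) * V) := by
  rw [← add_sum_erase _ _ (mem_degLT.2 (zero_mem _))]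
  congr 1
  rw [← sum_fiberwise_of_maps_to (g := natDegree) (t := range k) fun V hV => by
    obtain ⟨hV0, hV⟩ := mem_erase.1 hV
    rw [mem_degLT, mem_degreeLT] at hV
    exact mem_range.2 ((natDegree_lt_iff_degree_lt hV0).2 hV)]
  refine sum_congr rfl fun d hd => ?_
  have hinj : Set.InjOn (fun x : Fqˣ × Fq[X] => C (x.1 : Fq) * x.2)
      (univ ×ˢ Mdeg Fq d : Finset (Fqˣ × Fq[X])) := by
    rintro ⟨c, V⟩ hx ⟨c', V'⟩ hx' heq
    simp only [coe_product, Set.mem_prod, mem_coe, mem_Mdeg] at hx hx' heq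
    have hc : (c : Fq) = c' := by
      simpa [hx.2.1.leadingCoeff, hx'.2.1.leadingCoeff] using congr_arg leadingCoeff heq
    rw [← hc] at heq
    rw [Units.val_inj.1 hc, mul_left_cancel₀ (C_ne_zero.2 c.ne_zero) heq]
  have himage : ((degLT Fq k).erase 0).filter (·.natDegree = d) =
      (univ ×ˢ Mdeg Fq d).image fun x : Fqˣ × Fq[X] => C (x.1 : Fq) * x.2 := by
    ext V
    simp only [mem_filter, mem_erase, mem_degLT, mem_degreeLT, mem_image,
      mem_product, mem_univ, true_and, mem_Mdeg, Prod.exists]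
    constructor
    · rintro ⟨⟨hV0, -⟩, rfl⟩
      have hl : V.leadingCoeff ≠ 0 := leadingCoeff_ne_zero.2 hV0
      refine ⟨Units.mk0 _ hl, C V.leadingCoeff⁻¹ * V, ⟨?_, ?_⟩, ?_⟩
      · rw [Monic, leadingCoeff_mul, leadingCoeff_C, inv_mul_cancel₀ hl]
      · rw [natDegree_C_mul (inv_ne_zero hl)]
      · rw [Units.val_mk0, ← mul_assoc, ← C_mul, mul_inv_cancel₀ hl, C_1, one_mul]
    · rintro ⟨c, V, ⟨hmon, rfl⟩, rfl⟩
      refine ⟨⟨mul_ne_zero (C_ne_zero.2 c.ne_zero) hmon.ne_zero, ?_⟩, ?_⟩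
      · rw [degree_C_mul c.ne_zero, degree_eq_natDegree hmon.ne_zero]
        exact_mod_cast mem_range.1 hd
      · rw [natDegree_C_mul c.ne_zero]
  rw [himage, sum_image hinj, sum_product]

end PolynomialFinsets

section AdditiveCharacters

variable [Fintype Fq] (p : ℕ) [Fact p.Prime] [Algebra (ZMod p) Fq]

variable (Fq) in
noncomputable def traceAddChar : AddChar Fq ℂ :=
  ZMod.stdAddChar.compAddMonoidHom (Algebra.trace (ZMod p) Fq).toAddMonoidHom

theorem traceAddChar_apply (x : Fq) : traceAddChar Fq p x = stdChar Fq p x := by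
  simp [traceAddChar, ZMod.stdAddChar_apply, ZMod.toCircle_apply, stdChar]

theorem stdChar_zero : stdChar Fq p 0 = 1 := by
  rw [← traceAddChar_apply, AddChar.map_zero_eq_one]

theorem traceAddChar_ne_one (hp : p = ringChar Fq) : traceAddChar Fq p ≠ 1 := by
  subst hp
  obtain ⟨b, hb⟩ := FiniteField.trace_to_zmod_nondegenerate Fq (one_ne_zero (α := Fq))
  rw [one_mul] at hb
  refine AddChar.ne_one_iff.2 ⟨b, fun h => hb (ZMod.injective_stdAddChar ?_)⟩
  exact h.trans (AddChar.map_zero_eq_one _).symm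

theorem sum_units_eq_sum_sub_zero {M : Type*} [AddCommGroup M] (F : Fq → M) :
    ∑ c : Fqˣ, F c = ∑ x, F x - F 0 := by
  have hunits : (univ : Finset Fqˣ).map ⟨Units.val, Units.val_injective⟩ = univ.erase 0 := by
    ext x
    simpa using ⟨fun ⟨u, hu⟩ => hu ▸ u.ne_zero, fun h => ⟨Units.mk0 x h, rfl⟩⟩
  rw [eq_sub_iff_add_eq, ← sum_erase_add _ _ (mem_univ (0 : Fq)), ← hunits, sum_map]
  rfl

theorem sum_units_stdChar (hp : p = ringChar Fq) : ∑ c : Fqˣ, stdChar Fq p c = -1 := by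
  simp_rw [← traceAddChar_apply]
  rw [sum_units_eq_sum_sub_zero, AddChar.sum_eq_zero_of_ne_one (traceAddChar_ne_one p hp),
    AddChar.map_zero_eq_one, zero_sub]

theorem conj_stdChar (x : Fq) : starRingEnd ℂ (stdChar Fq p x) = stdChar Fq p (-x) := by
  simp only [← traceAddChar_apply, AddChar.map_neg_eq_inv]
  rw [Complex.inv_eq_conj]
  simp [traceAddChar, ZMod.stdAddChar_apply, Circle.norm_coe]

end AdditiveCharacters

section ResidueCoefficient

variable (Fq) in
/-- The coefficient of `T⁻¹` in the expansion of `g / f` for monic `f`, as a function of `g`. -/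
noncomputable def residueCoeff (f : Fq[X]) : Fq[X] →ₗ[Fq] Fq :=
  (lcoeff Fq (f.natDegree - 1)).comp (modByMonicHom f)

variable {f : Fq[X]}

theorem residueCoeff_eq_zero_of_dvd (hf : f.Monic) {g : Fq[X]} (h : f ∣ g) :
    residueCoeff Fq f g = 0 := by
  simp [residueCoeff, (modByMonic_eq_zero_iff_dvd hf).2 h]

theorem residueCoeff_eq_of_dvd_sub (hf : f.Monic) {a b : Fq[X]} (h : f ∣ a - b) :
    residueCoeff Fq f a = residueCoeff Fq f b :=
  sub_eq_zero.1 (by rw [← map_sub]; exact residueCoeff_eq_zero_of_dvd hf h)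

theorem residueCoeff_of_natDegree_lt (hf : f.Monic) {g : Fq[X]} (hg : g.natDegree < f.natDegree) :
    residueCoeff Fq f g = g.coeff (f.natDegree - 1) := by
  rcases eq_or_ne g 0 with rfl | hg0
  · simp
  have hlt : g.degree < f.degree := by
    rwa [degree_eq_natDegree hg0, degree_eq_natDegree hf.ne_zero, Nat.cast_lt]
  simp [residueCoeff, (modByMonic_eq_self_iff hf).2 hlt]

theorem residueCoeff_C_mul_X_pow_mul (hf : f.Monic) (b : Fq) {W : Fq[X]} (hW0 : W ≠ 0)
    (hW : W.natDegree < f.natDegree) :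
    residueCoeff Fq f (C b * X ^ (f.natDegree - 1 - W.natDegree) * W) = b * W.leadingCoeff := by
  rcases eq_or_ne b 0 with rfl | hb
  · simp
  have hdeg : (C b * X ^ (f.natDegree - 1 - W.natDegree) * W).natDegree = f.natDegree - 1 := by
    rw [natDegree_mul (mul_ne_zero (C_ne_zero.2 hb) (pow_ne_zero _ X_ne_zero)) hW0,
      natDegree_C_mul_X_pow _ _ hb]
    omega
  have hcoeff : ∀ g : Fq[X], g.natDegree = f.natDegree - 1 →
      g.coeff (f.natDegree - 1) = g.leadingCoeff := fun g hg => hg ▸ rfl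
  rw [residueCoeff_of_natDegree_lt hf (by omega), hcoeff _ hdeg, leadingCoeff_mul,
    leadingCoeff_C_mul_X_pow]

theorem residueCoeff_mul_of_mem_degreeLT (hf : f.Monic) {m : ℕ} {h V : Fq[X]}
    (hh : h.natDegree ≤ m) (hV : V ∈ degreeLT Fq (f.natDegree - m)) :
    residueCoeff Fq f (h * V) = h.coeff m * V.coeff (f.natDegree - m - 1) := by
  rcases eq_or_ne V 0 with rfl | hV0
  · simp
  rw [mem_degreeLT, degree_eq_natDegree hV0, Nat.cast_lt] at hV
  rw [residueCoeff_of_natDegree_lt hf (natDegree_mul_le.trans_lt (by omega)),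
    show f.natDegree - 1 = m + (f.natDegree - m - 1) by omega,
    coeff_mul_add_eq_of_natDegree_le hh (by omega)]

end ResidueCoefficient

section PoissonSummation

variable [Fintype Fq] (p : ℕ) [Fact p.Prime] [Algebra (ZMod p) Fq] {f : Fq[X]}

theorem mem_residues (hf : f.Monic) {u : Fq[X]} : u ∈ residues Fq f ↔ u.degree < f.degree := by
  rw [residues_eq_degLT, mem_degLT, mem_degreeLT, degree_eq_natDegree hf.ne_zero]

variable (f) in
noncomputable def eqChar : AddChar Fq[X] ℂ :=
  (traceAddChar Fq p).compAddMonoidHom (residueCoeff Fq f).toAddMonoidHom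

theorem eqChar_apply (g : Fq[X]) : eqChar p f g = eqF Fq p g f := by
  simp [eqChar, traceAddChar_apply, eqF, residueCoeff]

theorem eqF_add (a b : Fq[X]) : eqF Fq p (a + b) f = eqF Fq p a f * eqF Fq p b f := by
  simp only [← eqChar_apply, AddChar.map_add_eq_mul]

theorem eqF_eq_stdChar (g : Fq[X]) : eqF Fq p g f = stdChar Fq p (residueCoeff Fq f g) := by
  simp [← eqChar_apply, eqChar, traceAddChar_apply]

theorem eqF_eq_one_of_dvd (hf : f.Monic) {g : Fq[X]} (h : f ∣ g) : eqF Fq p g f = 1 := by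
  rw [eqF_eq_stdChar, residueCoeff_eq_zero_of_dvd hf h, ← traceAddChar_apply,
    AddChar.map_zero_eq_one]

theorem eqF_congr (hf : f.Monic) {a b : Fq[X]} (h : f ∣ a - b) : eqF Fq p a f = eqF Fq p b f := by
  rw [eqF_eq_stdChar, eqF_eq_stdChar, residueCoeff_eq_of_dvd_sub hf h]

theorem sum_degLT_eq_zero_of_addChar {R : Type*} [CommRing R] [IsDomain R] (ψ : AddChar Fq[X] R)
    {k : ℕ} {g₀ : Fq[X]} (hg₀ : g₀ ∈ degreeLT Fq k) (hψ : ψ g₀ ≠ 1) :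
    ∑ g ∈ degLT Fq k, ψ g = 0 := by
  refine eq_zero_of_mul_eq_self_left hψ ?_
  rw [mul_sum]
  exact sum_equiv (Equiv.addLeft g₀)
    (fun g => by simp [mem_degLT, Submodule.add_mem_iff_right _ hg₀])
    fun g _ => (AddChar.map_add_eq_mul ψ g₀ g).symm

theorem sum_degLT_eqF_mul_eq_zero (hp : p = ringChar Fq) (hf : f.Monic) {k : ℕ} {W : Fq[X]}
    (hW0 : W ≠ 0) (hW : W.natDegree < f.natDegree) (hk : f.natDegree ≤ k + W.natDegree) :
    ∑ g ∈ degLT Fq k, eqF Fq p (g * W) f = 0 := by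
  obtain ⟨x, hx⟩ := AddChar.ne_one_iff.1 (traceAddChar_ne_one p hp)
  let g₀ := C (x / W.leadingCoeff) * X ^ (f.natDegree - 1 - W.natDegree)
  have hg₀ : g₀ ∈ degreeLT Fq k := by
    rw [mem_degreeLT]
    exact (degree_C_mul_X_pow_le _ _).trans_lt (by exact_mod_cast (by omega : _ < k))
  have hψ : (eqChar p f).compAddMonoidHom (AddMonoidHom.mulRight W) g₀ ≠ 1 := by
    simpa [eqChar, g₀, residueCoeff_C_mul_X_pow_mul hf _ hW0 hW, hW0] using hx
  rw [← sum_degLT_eq_zero_of_addChar _ hg₀ hψ]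
  simp [eqChar_apply]

theorem sum_residues_eqF_mul (hp : p = ringChar Fq) (hf : f.Monic) (w : Fq[X]) :
    ∑ V ∈ residues Fq f, eqF Fq p (w * V) f =
      if f ∣ w then (Fintype.card Fq : ℂ) ^ f.natDegree else 0 := by
  split_ifs with hw
  · simp [eqF_eq_one_of_dvd p hf (hw.mul_right _), residues_eq_degLT, card_degLT]
  · have hW0 : w %ₘ f ≠ 0 := fun h => hw ((modByMonic_eq_zero_iff_dvd hf).1 h)
    have hW : (w %ₘ f).natDegree < f.natDegree :=
      natDegree_modByMonic_lt w hf fun h => hw (h ▸ one_dvd w)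
    rw [← sum_degLT_eqF_mul_eq_zero p hp hf hW0 hW le_self_add, residues_eq_degLT]
    refine sum_congr rfl fun V _ => eqF_congr p hf ⟨V * (w /ₘ f), ?_⟩
    linear_combination -V * modByMonic_add_div w f

theorem fourier_expansion (hp : p = ringChar Fq) (hf : f.Monic) {F : Fq[X] → ℂ}
    (hF : ∀ a b, f ∣ a - b → F a = F b) (h : Fq[X]) :
    (Fintype.card Fq : ℂ) ^ f.natDegree * F h =
      ∑ V ∈ residues Fq f, eqF Fq p (h * V) f *
        ∑ u ∈ residues Fq f, F u * eqF Fq p (-u * V) f := by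
  have hmod : h %ₘ f ∈ residues Fq f := (mem_residues hf).2 (degree_modByMonic_lt h hf)
  have hdvd : f ∣ h - h %ₘ f := (dvd_sub_iff_eq_modByMonic hf (degree_modByMonic_lt h hf)).2 rfl
  calc (Fintype.card Fq : ℂ) ^ f.natDegree * F h
      = ∑ u ∈ residues Fq f,
          F u * if f ∣ h - u then (Fintype.card Fq : ℂ) ^ f.natDegree else 0 := by
        rw [sum_eq_single_of_mem _ hmod fun u hu hne => by
            rw [if_neg (mt (dvd_sub_iff_eq_modByMonic hf ((mem_residues hf).1 hu)).1 hne),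
              mul_zero],
          if_pos hdvd, hF _ _ hdvd, mul_comm]
    _ = ∑ u ∈ residues Fq f, F u * ∑ V ∈ residues Fq f, eqF Fq p ((h - u) * V) f := by
        simp_rw [sum_residues_eqF_mul p hp hf]
    _ = _ := by
        simp_rw [mul_sum, sub_eq_add_neg, add_mul, eqF_add]
        rw [sum_comm]
        exact sum_congr rfl fun V _ => sum_congr rfl fun u _ => by ring

end PoissonSummation

section SumsOverMonics

variable [Fintype Fq] (p : ℕ) [Fact p.Prime] [Algebra (ZMod p) Fq] {f : Fq[X]}

theorem sum_Mdeg_eqF_mul_of_mem_degreeLT (hf : f.Monic) (m : ℕ) {V : Fq[X]}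
    (hV : V ∈ degreeLT Fq (f.natDegree - m)) :
    ∑ h ∈ Mdeg Fq m, eqF Fq p (h * V) f =
      (Fintype.card Fq : ℂ) ^ m * stdChar Fq p (V.coeff (f.natDegree - m - 1)) := by
  rw [sum_congr rfl fun h hh => by
    obtain ⟨hmon, hdeg⟩ := mem_Mdeg.1 hh
    rw [eqF_eq_stdChar, residueCoeff_mul_of_mem_degreeLT hf hdeg.le hV,
      show h.coeff m = 1 from hdeg ▸ hmon.coeff_natDegree, one_mul]]
  rw [sum_const, card_Mdeg, nsmul_eq_mul, Nat.cast_pow]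

theorem sum_Mdeg_eqF_mul_eq_zero (hp : p = ringChar Fq) (hf : f.Monic) {m : ℕ} {V : Fq[X]}
    (hV0 : V ≠ 0) (hV : V.natDegree < f.natDegree) (hmV : f.natDegree ≤ m + V.natDegree) :
    ∑ h ∈ Mdeg Fq m, eqF Fq p (h * V) f = 0 := by
  simp_rw [sum_Mdeg, add_mul, eqF_add, ← mul_sum]
  rw [sum_degLT_eqF_mul_eq_zero p hp hf hV0 hV hmV, mul_zero]

theorem sum_residues_sum_Mdeg_eqF_mul (hp : p = ringChar Fq) (hf : f.Monic) (m : ℕ)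
    (Φ : Fq[X] → ℂ) :
    ∑ V ∈ residues Fq f, (∑ h ∈ Mdeg Fq m, eqF Fq p (h * V) f) * Φ V =
      (Fintype.card Fq : ℂ) ^ m * ∑ V ∈ degLT Fq (f.natDegree - m),
        stdChar Fq p (V.coeff (f.natDegree - m - 1)) * Φ V := by
  have hsub : degLT Fq (f.natDegree - m) ⊆ residues Fq f := fun V hV =>
    mem_degLT.2 (degreeLT_mono (Nat.sub_le _ _) (mem_degLT.1 hV))
  rw [← sum_subset hsub, mul_sum]
  · exact sum_congr rfl fun V hV => by
      rw [sum_Mdeg_eqF_mul_of_mem_degreeLT p hf m (mem_degLT.1 hV), mul_assoc]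
  · intro V hV hVm
    rw [residues_eq_degLT, mem_degLT, mem_degreeLT] at hV
    rw [mem_degLT, mem_degreeLT] at hVm
    have hV0 : V ≠ 0 := by rintro rfl; simp at hVm
    rw [degree_eq_natDegree hV0, Nat.cast_lt] at hV
    rw [degree_eq_natDegree hV0, Nat.cast_lt, not_lt] at hVm
    rw [sum_Mdeg_eqF_mul_eq_zero p hp hf hV0 hV (by omega), zero_mul]

end SumsOverMonics

section CubicResidueSymbol

variable [Fintype Fq] {ζ : Fq}

theorem pow_card_pow_sub_one_div_three (hq3 : Fintype.card Fq % 3 = 1) (c : Fq) (d : ℕ) :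
    c ^ ((Fintype.card Fq ^ d - 1) / 3) = (c ^ ((Fintype.card Fq - 1) / 3)) ^ d := by
  set q := Fintype.card Fq
  obtain ⟨t, ht⟩ : 3 ∣ q - 1 := by simpa using three_dvd_pow_sub_one hq3 1
  have hq : q = 3 * t + 1 := by have := Fintype.card_pos (α := Fq); omega
  have hgeom : q ^ d - 1 = 3 * (t * ∑ i ∈ range d, q ^ i) := by
    rw [hq, ← geom_sum_mul_add (3 * t) d, Nat.add_sub_cancel]
    ring
  rw [hgeom, ht, Nat.mul_div_cancel_left _ (by norm_num), Nat.mul_div_cancel_left _ (by norm_num),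
    pow_mul, ← prod_pow_eq_pow_sum]
  rw [prod_congr rfl fun i _ => FiniteField.pow_card_pow i _, prod_const, card_range]

theorem omega3_isPrimitiveRoot : IsPrimitiveRoot omega3 3 := by
  simpa [omega3] using Complex.isPrimitiveRoot_exp 3 (by norm_num)

theorem cubicSymP_eq_ite (P a : Fq[X]) :
    cubicSymP Fq ζ P a =
      if AdjoinRoot.mk P a = 0 then 0
      else if AdjoinRoot.mk P a ^ ((Fintype.card Fq ^ P.natDegree - 1) / 3) = 1 then 1
      else if AdjoinRoot.mk P a ^ ((Fintype.card Fq ^ P.natDegree - 1) / 3) = AdjoinRoot.of P ζ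
        then omega3
      else omega3 ^ 2 := by
  simp only [cubicSymP, ← AdjoinRoot.mk_eq_zero, map_sub, map_pow, map_one, AdjoinRoot.mk_C,
    sub_eq_zero]

theorem cubicSymP_congr {P a b : Fq[X]} (h : P ∣ a - b) :
    cubicSymP Fq ζ P a = cubicSymP Fq ζ P b := by
  rw [cubicSymP_eq_ite, cubicSymP_eq_ite, AdjoinRoot.mk_eq_mk.2 h]

variable {P : Fq[X]} [Fact (Irreducible P)]

theorem cubicSymP_eq_omega3_pow (hζ : IsPrimitiveRoot ζ 3) {a : Fq[X]} (ha : AdjoinRoot.mk P a ≠ 0)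
    {k : ℕ} (hk : AdjoinRoot.mk P a ^ ((Fintype.card Fq ^ P.natDegree - 1) / 3) =
      AdjoinRoot.of P ζ ^ k) :
    cubicSymP Fq ζ P a = omega3 ^ k := by
  have hζ' := hζ.map_of_injective (AdjoinRoot.of P).injective
  have hmod : ∀ {M : Type} [Monoid M] {x : M}, x ^ 3 = 1 → x ^ k = x ^ (k % 3) := fun hx => by
    rw [← Nat.mod_add_div k 3, pow_add, pow_mul, hx, one_pow, mul_one, Nat.mod_add_div]
  rw [cubicSymP_eq_ite, if_neg ha, hk, hmod hζ'.pow_eq_one, hmod omega3_isPrimitiveRoot.pow_eq_one]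
  have hne : ∀ i j, i < 3 → j < 3 → i ≠ j → AdjoinRoot.of P ζ ^ i ≠ AdjoinRoot.of P ζ ^ j :=
    fun i j hi hj hij h => hij (hζ'.pow_inj hi hj h)
  obtain h | h | h : k % 3 = 0 ∨ k % 3 = 1 ∨ k % 3 = 2 := by omega
  · simp [h]
  · rw [h, if_neg (by simpa using hne 1 0 (by norm_num) (by norm_num) (by norm_num)),
      if_pos (pow_one _), pow_one]
  · rw [h, if_neg (by simpa using hne 2 0 (by norm_num) (by norm_num) (by norm_num)),
      if_neg (by simpa using hne 2 1 (by norm_num) (by norm_num) (by norm_num))]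

theorem exists_mk_pow_eq_pow (hq3 : Fintype.card Fq % 3 = 1) (hζ : IsPrimitiveRoot ζ 3)
    {a : Fq[X]} (ha : AdjoinRoot.mk P a ≠ 0) :
    ∃ k, AdjoinRoot.mk P a ^ ((Fintype.card Fq ^ P.natDegree - 1) / 3) = AdjoinRoot.of P ζ ^ k := by
  have hP0 : P ≠ 0 := (Fact.out : Irreducible P).ne_zero
  let pb := AdjoinRoot.powerBasis hP0
  have : Module.Finite Fq (AdjoinRoot P) := pb.finite
  have : Finite (AdjoinRoot P) := Module.finite_of_finite Fq
  have : Fintype (AdjoinRoot P) := Fintype.ofFinite _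
  have hcard : Fintype.card (AdjoinRoot P) = Fintype.card Fq ^ P.natDegree := by
    rw [Module.card_eq_pow_finrank (K := Fq), pb.finrank, AdjoinRoot.powerBasis_dim]
  have hcube : (AdjoinRoot.mk P a ^ ((Fintype.card Fq ^ P.natDegree - 1) / 3)) ^ 3 = 1 := by
    rw [← pow_mul, Nat.div_mul_cancel (three_dvd_pow_sub_one hq3 _), ← hcard,
      FiniteField.pow_card_sub_one_eq_one _ ha]
  obtain ⟨k, -, hk⟩ :=
    (hζ.map_of_injective (AdjoinRoot.of P).injective).eq_pow_of_pow_eq_one hcube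
  exact ⟨k, hk.symm⟩

theorem cubicSymP_mul (hq3 : Fintype.card Fq % 3 = 1) (hζ : IsPrimitiveRoot ζ 3) (a b : Fq[X]) :
    cubicSymP Fq ζ P (a * b) = cubicSymP Fq ζ P a * cubicSymP Fq ζ P b := by
  by_cases ha : AdjoinRoot.mk P a = 0
  · simp [cubicSymP_eq_ite (P := P), ha]
  by_cases hb : AdjoinRoot.mk P b = 0
  · simp [cubicSymP_eq_ite (P := P), hb]
  obtain ⟨i, hi⟩ := exists_mk_pow_eq_pow hq3 hζ ha
  obtain ⟨j, hj⟩ := exists_mk_pow_eq_pow hq3 hζ hb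
  rw [cubicSymP_eq_omega3_pow hζ ha hi, cubicSymP_eq_omega3_pow hζ hb hj,
    cubicSymP_eq_omega3_pow (k := i + j) hζ (by simpa using mul_ne_zero ha hb)
      (by rw [map_mul, mul_pow, hi, hj, pow_add]), pow_add]

theorem cubicSymP_one : cubicSymP Fq ζ P 1 = 1 := by
  simp [cubicSymP_eq_ite (P := P)]

theorem cubicSymP_C (hq3 : Fintype.card Fq % 3 = 1) (hζ : IsPrimitiveRoot ζ 3) {c : Fq}
    (hc : c ≠ 0) {k : ℕ} (hk : c ^ ((Fintype.card Fq - 1) / 3) = ζ ^ k) :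
    cubicSymP Fq ζ P (C c) = omega3 ^ (k * P.natDegree) := by
  refine cubicSymP_eq_omega3_pow hζ (by simpa using hc) ?_
  rw [AdjoinRoot.mk_C, ← map_pow, pow_card_pow_sub_one_div_three hq3, hk, ← pow_mul, map_pow]

end CubicResidueSymbol

section CubicSymbol

open UniqueFactorizationMonoid

variable [Fintype Fq] {ζ : Fq} {f : Fq[X]}

theorem cubicSym_mul (hq3 : Fintype.card Fq % 3 = 1) (hζ : IsPrimitiveRoot ζ 3) (a b : Fq[X]) :
    cubicSym Fq ζ f (a * b) = cubicSym Fq ζ f a * cubicSym Fq ζ f b := by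
  simp only [cubicSym, ← Multiset.prod_map_mul]
  refine congr_arg _ (Multiset.map_congr rfl fun P hP => ?_)
  have : Fact (Irreducible P) := ⟨irreducible_of_normalized_factor P hP⟩
  exact cubicSymP_mul hq3 hζ a b

theorem cubicSym_one : cubicSym Fq ζ f 1 = 1 := by
  refine Multiset.prod_eq_one fun x hx => ?_
  obtain ⟨P, hP, rfl⟩ := Multiset.mem_map.1 hx
  have : Fact (Irreducible P) := ⟨irreducible_of_normalized_factor P hP⟩
  exact cubicSymP_one

theorem cubicSym_congr {a b : Fq[X]} (h : f ∣ a - b) : cubicSym Fq ζ f a = cubicSym Fq ζ f b :=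
  congr_arg Multiset.prod (Multiset.map_congr rfl fun _ hP =>
    cubicSymP_congr ((dvd_of_mem_normalizedFactors hP).trans h))

theorem cubicSym_C (hq3 : Fintype.card Fq % 3 = 1) (hζ : IsPrimitiveRoot ζ 3) (hf : f.Monic)
    {c : Fq} (hc : c ≠ 0) {k : ℕ} (hk : c ^ ((Fintype.card Fq - 1) / 3) = ζ ^ k) :
    cubicSym Fq ζ f (C c) = omega3 ^ (k * f.natDegree) := by
  have hmem : ∀ P ∈ normalizedFactors f, Irreducible P ∧ P.Monic := fun P hP =>
    have h := (Polynomial.mem_normalizedFactors_iff hf.ne_zero).1 hP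
    ⟨h.1, h.2.1⟩
  have hdeg : ((normalizedFactors f).map natDegree).sum = f.natDegree := by
    rw [← natDegree_multiset_prod_of_monic _ fun P hP => (hmem P hP).2,
      prod_normalizedFactors_eq hf.ne_zero, hf.normalize_eq_self]
  have hpow : ∀ s : Multiset Fq[X], (s.map fun P => omega3 ^ (k * P.natDegree)).prod =
      omega3 ^ (k * (s.map natDegree).sum) := fun s => by
    induction s using Multiset.induction_on with
    | empty => simp
    | cons P s ih => simp [ih, mul_add, pow_add]
  rw [cubicSym, Multiset.map_congr rfl fun P hP =>
    have : Fact (Irreducible P) := ⟨(hmem P hP).1⟩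
    cubicSymP_C hq3 hζ hc hk, hpow, hdeg]

end CubicSymbol

section CubicCharacterOnConstants

variable [Fintype Fq] {ζ : Fq} {f : Fq[X]}

theorem exists_cubicSym_C_eq (hq3 : Fintype.card Fq % 3 = 1) (hζ : IsPrimitiveRoot ζ 3)
    (hf : f.Monic) {c : Fq} (hc : c ≠ 0) :
    ∃ k, cubicSym Fq ζ f (C c) = omega3 ^ (k * f.natDegree) := by
  have hcube : (c ^ ((Fintype.card Fq - 1) / 3)) ^ 3 = 1 := by
    rw [← pow_mul, Nat.div_mul_cancel (by simpa using three_dvd_pow_sub_one hq3 1),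
      FiniteField.pow_card_sub_one_eq_one c hc]
  obtain ⟨k, -, hk⟩ := hζ.eq_pow_of_pow_eq_one hcube
  exact ⟨k, cubicSym_C hq3 hζ hf hc hk.symm⟩

theorem cubicSym_C_of_three_dvd (hq3 : Fintype.card Fq % 3 = 1) (hζ : IsPrimitiveRoot ζ 3)
    (hf : f.Monic) (h3 : 3 ∣ f.natDegree) {c : Fq} (hc : c ≠ 0) : cubicSym Fq ζ f (C c) = 1 := by
  obtain ⟨k, hk⟩ := exists_cubicSym_C_eq hq3 hζ hf hc
  rw [hk, omega3_isPrimitiveRoot.pow_eq_one_iff_dvd]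
  exact dvd_mul_of_dvd_right h3 k

theorem norm_cubicSym_C (hq3 : Fintype.card Fq % 3 = 1) (hζ : IsPrimitiveRoot ζ 3)
    (hf : f.Monic) {c : Fq} (hc : c ≠ 0) : ‖cubicSym Fq ζ f (C c)‖ = 1 := by
  obtain ⟨k, hk⟩ := exists_cubicSym_C_eq hq3 hζ hf hc
  rw [hk, norm_pow, omega3_isPrimitiveRoot.norm'_eq_one (by norm_num), one_pow]

theorem cubicSym_C_neg_one (hq3 : Fintype.card Fq % 3 = 1) (hζ : IsPrimitiveRoot ζ 3)
    (hf : f.Monic) : cubicSym Fq ζ f (C (-1)) = 1 := by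
  obtain ⟨k, hk⟩ := exists_cubicSym_C_eq hq3 hζ hf (neg_ne_zero.2 (one_ne_zero (α := Fq)))
  calc cubicSym Fq ζ f (C (-1)) = cubicSym Fq ζ f (C (-1) * C (-1) * C (-1)) := by
        simp
    _ = (omega3 ^ 3) ^ (k * f.natDegree) := by
        rw [cubicSym_mul hq3 hζ, cubicSym_mul hq3 hζ, hk, ← pow_mul, mul_comm 3, pow_mul]
        ring
    _ = 1 := by rw [omega3_isPrimitiveRoot.pow_eq_one, one_pow]

theorem cubicSym_C_inv (hq3 : Fintype.card Fq % 3 = 1) (hζ : IsPrimitiveRoot ζ 3)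
    (hf : f.Monic) {c : Fq} (hc : c ≠ 0) :
    cubicSym Fq ζ f (C c⁻¹) = starRingEnd ℂ (cubicSym Fq ζ f (C c)) := by
  rw [← Complex.inv_eq_conj (norm_cubicSym_C hq3 hζ hf hc)]
  refine eq_inv_of_mul_eq_one_left ?_
  rw [← cubicSym_mul hq3 hζ, ← C_mul, inv_mul_cancel₀ hc, C_1, cubicSym_one]

theorem exists_cubicSym_C_ne_one (hq3 : Fintype.card Fq % 3 = 1) (hζ : IsPrimitiveRoot ζ 3)
    (hf : f.Monic) (h3 : ¬ 3 ∣ f.natDegree) : ∃ c : Fq, c ≠ 0 ∧ cubicSym Fq ζ f (C c) ≠ 1 := by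
  set q := Fintype.card Fq
  obtain ⟨g, hg⟩ := IsCyclic.exists_generator (α := Fqˣ)
  have horder : orderOf g = q - 1 := by
    rw [orderOf_eq_card_of_forall_mem_zpowers hg, Nat.card_eq_fintype_card, Fintype.card_units]
  have hq : 4 ≤ q := by have := Fintype.one_lt_card (α := Fq); omega
  have hgt : (g : Fq) ^ ((q - 1) / 3) ≠ 1 := by
    rw [← Units.val_pow_eq_pow_val, Ne, Units.val_eq_one]
    exact pow_ne_one_of_lt_orderOf (by omega) (by omega)
  have hcube : ((g : Fq) ^ ((q - 1) / 3)) ^ 3 = 1 := by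
    rw [← pow_mul, Nat.div_mul_cancel (by omega), FiniteField.pow_card_sub_one_eq_one _ g.ne_zero]
  obtain ⟨k, -, hk⟩ := hζ.eq_pow_of_pow_eq_one hcube
  have hk3 : ¬ 3 ∣ k := fun h => hgt (by rw [← hk, hζ.pow_eq_one_iff_dvd]; exact h)
  refine ⟨g, g.ne_zero, ?_⟩
  rw [cubicSym_C hq3 hζ hf g.ne_zero hk.symm, Ne, omega3_isPrimitiveRoot.pow_eq_one_iff_dvd]
  exact fun h => (Nat.prime_three.dvd_mul.1 h).elim hk3 h3

end CubicCharacterOnConstants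

section GaussSums

variable [Fintype Fq] {ζ : Fq} (p : ℕ) [Algebra (ZMod p) Fq] {f : Fq[X]}

theorem sum_residues_C_mul {M : Type*} [AddCommMonoid M] {c : Fq} (hc : c ≠ 0) (F : Fq[X] → M) :
    ∑ u ∈ residues Fq f, F (C c * u) = ∑ u ∈ residues Fq f, F u := by
  simp_rw [← smul_eq_C_mul]
  exact sum_equiv (MulAction.toPerm (Units.mk0 c hc))
    (fun u => by simp [residues_eq_degLT, mem_degLT, Units.smul_def, Submodule.smul_mem_iff _ hc])
    fun _ _ => rfl

variable (hq3 : Fintype.card Fq % 3 = 1) (hζ : IsPrimitiveRoot ζ 3)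
include hq3 hζ

theorem Gq_C_mul {c : Fq} (hc : c ≠ 0) (V : Fq[X]) :
    Gq Fq ζ p (C c * V) f = cubicSym Fq ζ f (C c⁻¹) * Gq Fq ζ p V f := by
  rw [Gq, Gq, ← sum_residues_C_mul (inv_ne_zero hc), mul_sum]
  refine sum_congr rfl fun u _ => ?_
  rw [cubicSym_mul hq3 hζ, mul_assoc, mul_mul_mul_comm, ← C_mul, inv_mul_cancel₀ hc, C_1, one_mul]

theorem sum_residues_cubicSym_mul_eqF_neg_mul (hf : f.Monic) (V : Fq[X]) :
    ∑ u ∈ residues Fq f, cubicSym Fq ζ f u * eqF Fq p (-u * V) f = Gq Fq ζ p V f := by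
  rw [← sum_residues_C_mul (neg_ne_zero.2 (one_ne_zero (α := Fq))), Gq]
  refine sum_congr rfl fun u _ => ?_
  rw [cubicSym_mul hq3 hζ, cubicSym_C_neg_one hq3 hζ hf, one_mul, C_neg, C_1, neg_one_mul, neg_neg]

theorem Gq_zero_eq_zero [Fact p.Prime] (hf : f.Monic) (h3 : ¬ 3 ∣ f.natDegree) :
    Gq Fq ζ p 0 f = 0 := by
  obtain ⟨c, hc, hχ⟩ := exists_cubicSym_C_ne_one hq3 hζ hf h3
  have hG : Gq Fq ζ p 0 f = ∑ u ∈ residues Fq f, cubicSym Fq ζ f u := by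
    simp [Gq, eqF_eq_one_of_dvd p hf (dvd_zero f)]
  rw [hG]
  refine eq_zero_of_mul_eq_self_left hχ ?_
  conv_rhs => rw [← sum_residues_C_mul hc]
  simp_rw [mul_sum, cubicSym_mul hq3 hζ]

end GaussSums

section SumsOverConstants

variable [Fintype Fq] {ζ : Fq} (p : ℕ) [Fact p.Prime] [Algebra (ZMod p) Fq] {f : Fq[X]}
variable (hq3 : Fintype.card Fq % 3 = 1) (hζ : IsPrimitiveRoot ζ 3) (hf : f.Monic)
include hq3 hζ hf

theorem sum_units_cubicSym_C_inv_of_three_dvd (h3 : 3 ∣ f.natDegree) :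
    ∑ c : Fqˣ, cubicSym Fq ζ f (C (c : Fq)⁻¹) = (Fintype.card Fq : ℂ) - 1 := by
  simp [cubicSym_C_of_three_dvd hq3 hζ hf h3, Fintype.card_units, Nat.cast_sub Fintype.card_pos]

theorem sum_units_stdChar_mul_cubicSym_C_inv_of_three_dvd (hp : p = ringChar Fq)
    (h3 : 3 ∣ f.natDegree) : ∑ c : Fqˣ, stdChar Fq p c * cubicSym Fq ζ f (C (c : Fq)⁻¹) = -1 := by
  simp [cubicSym_C_of_three_dvd hq3 hζ hf h3, sum_units_stdChar p hp]

theorem sum_units_cubicSym_C_inv_eq_zero (h3 : ¬ 3 ∣ f.natDegree) :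
    ∑ c : Fqˣ, cubicSym Fq ζ f (C (c : Fq)⁻¹) = 0 := by
  simp_rw [cubicSym_C_inv hq3 hζ hf (Units.ne_zero _), ← map_sum, map_eq_zero]
  obtain ⟨c₀, hc₀, hχ⟩ := exists_cubicSym_C_ne_one hq3 hζ hf h3
  refine eq_zero_of_mul_eq_self_left hχ ?_
  rw [mul_sum]
  exact Fintype.sum_equiv (Equiv.mulLeft (Units.mk0 c₀ hc₀)) _ _ fun c => by
    simp [cubicSym_mul hq3 hζ, C_mul]

theorem sum_units_stdChar_mul_cubicSym_C_inv :
    ∑ c : Fqˣ, stdChar Fq p c * cubicSym Fq ζ f (C (c : Fq)⁻¹) =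
      starRingEnd ℂ (∑ c : Fqˣ, cubicSym Fq ζ f (C (c : Fq)) * stdChar Fq p c) := by
  simp_rw [map_sum, map_mul, ← cubicSym_C_inv hq3 hζ hf (Units.ne_zero _), conj_stdChar]
  refine Fintype.sum_equiv (Equiv.neg Fqˣ) _ _ fun c => ?_
  rw [Equiv.neg_apply, Units.val_neg, neg_neg, inv_neg, neg_eq_neg_one_mul, C_mul,
    cubicSym_mul hq3 hζ, cubicSym_C_neg_one hq3 hζ hf, one_mul, mul_comm]

end SumsOverConstants

section Assembly

variable [Fintype Fq] {ζ : Fq} (p : ℕ) [Algebra (ZMod p) Fq] {f : Fq[X]}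
variable (hq3 : Fintype.card Fq % 3 = 1) (hζ : IsPrimitiveRoot ζ 3)
include hq3 hζ

theorem sum_units_sum_Mdeg_stdChar_coeff_mul_Gq {d j : ℕ} {a : Fq}
    (ha : ∀ V ∈ Mdeg Fq d, V.coeff j = a) :
    ∑ c : Fqˣ, ∑ V ∈ Mdeg Fq d,
        stdChar Fq p ((C (c : Fq) * V).coeff j) * Gq Fq ζ p (C (c : Fq) * V) f =
      (∑ c : Fqˣ, stdChar Fq p (c * a) * cubicSym Fq ζ f (C (c : Fq)⁻¹)) *
        ∑ V ∈ Mdeg Fq d, Gq Fq ζ p V f := by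
  rw [sum_mul_sum]
  refine sum_congr rfl fun c _ => sum_congr rfl fun V hV => ?_
  rw [coeff_C_mul, ha V hV, Gq_C_mul p hq3 hζ c.ne_zero, mul_assoc]

theorem sum_degLT_stdChar_coeff_mul_Gq [Fact p.Prime] (k : ℤ) :
    ∑ V ∈ degLT Fq k.toNat, stdChar Fq p (V.coeff (k.toNat - 1)) * Gq Fq ζ p V f =
      Gq Fq ζ p 0 f
        + (∑ c : Fqˣ, cubicSym Fq ζ f (C (c : Fq)⁻¹)) * ∑ V ∈ MdegLEZ Fq (k - 2), Gq Fq ζ p V f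
        + (∑ c : Fqˣ, stdChar Fq p c * cubicSym Fq ζ f (C (c : Fq)⁻¹)) *
            ∑ V ∈ MdegZ Fq (k - 1), Gq Fq ζ p V f := by
  rw [sum_degLT, coeff_zero, stdChar_zero, one_mul, sum_MdegLEZ, MdegZ]
  rcases lt_or_ge k 1 with hk | hk
  · simp [show k.toNat = 0 by omega, show (k - 2 + 1).toNat = 0 by omega,
      show ¬ 1 ≤ k by omega]
  obtain ⟨j, rfl⟩ : ∃ j : ℕ, k = j + 1 := ⟨(k - 1).toNat, by omega⟩
  rw [show ((j : ℤ) + 1).toNat = j + 1 by omega, show ((j : ℤ) + 1 - 2 + 1).toNat = j by omega,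
    if_pos (by omega), show ((j : ℤ) + 1 - 1).toNat = j by omega, Nat.add_sub_cancel,
    sum_range_succ, add_assoc, mul_sum,
    sum_units_sum_Mdeg_stdChar_coeff_mul_Gq p hq3 hζ (d := j) (a := 1) fun V hV =>
      (mem_Mdeg.1 hV).2 ▸ (mem_Mdeg.1 hV).1.coeff_natDegree]
  simp_rw [mul_one]
  congr 2
  refine sum_congr rfl fun d hd => ?_
  rw [sum_units_sum_Mdeg_stdChar_coeff_mul_Gq p hq3 hζ (a := 0) fun V hV =>
    coeff_eq_zero_of_natDegree_lt ((mem_Mdeg.1 hV).2 ▸ mem_range.1 hd)]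
  simp [stdChar_zero]

theorem sum_Mdeg_cubicSym_eq [Fact p.Prime] (hp : p = ringChar Fq) (hf : f.Monic) (m : ℕ) :
    (Fintype.card Fq : ℂ) ^ f.natDegree * ∑ h ∈ Mdeg Fq m, cubicSym Fq ζ f h =
      (Fintype.card Fq : ℂ) ^ m * (Gq Fq ζ p 0 f
        + (∑ c : Fqˣ, cubicSym Fq ζ f (C (c : Fq)⁻¹)) *
            ∑ V ∈ MdegLEZ Fq ((f.natDegree : ℤ) - m - 2), Gq Fq ζ p V f
        + (∑ c : Fqˣ, stdChar Fq p c * cubicSym Fq ζ f (C (c : Fq)⁻¹)) *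
            ∑ V ∈ MdegZ Fq ((f.natDegree : ℤ) - m - 1), Gq Fq ζ p V f) := by
  calc (Fintype.card Fq : ℂ) ^ f.natDegree * ∑ h ∈ Mdeg Fq m, cubicSym Fq ζ f h
      = ∑ h ∈ Mdeg Fq m, ∑ V ∈ residues Fq f, eqF Fq p (h * V) f *
          ∑ u ∈ residues Fq f, cubicSym Fq ζ f u * eqF Fq p (-u * V) f := by
        rw [mul_sum]
        exact sum_congr rfl fun h _ => fourier_expansion p hp hf (fun _ _ => cubicSym_congr) h
    _ = ∑ V ∈ residues Fq f, (∑ h ∈ Mdeg Fq m, eqF Fq p (h * V) f) * Gq Fq ζ p V f := by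
        simp_rw [sum_residues_cubicSym_mul_eqF_neg_mul p hq3 hζ hf, sum_mul]
        exact sum_comm
    _ = _ := by
        rw [sum_residues_sum_Mdeg_eqF_mul p hp hf m,
          ← show ((f.natDegree : ℤ) - m).toNat = f.natDegree - m by omega,
          sum_degLT_stdChar_coeff_mul_Gq p hq3 hζ]

end Assembly

theorem statement11_general (Fq : Type) [Field Fq] [Fintype Fq]
    (h3 : Fintype.card Fq % 3 = 1)
    (ζ : Fq) (hζ3 : ζ ^ 3 = 1) (hζ1 : ζ ≠ 1)
    (p : ℕ) [Fact p.Prime] [Algebra (ZMod p) Fq] (hp : p = ringChar Fq)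
    (f : Polynomial Fq) (hf : f.Monic) (n : ℕ) (hn : n = f.natDegree)
    (m : ℕ) :
    ((3 ∣ n) →
      (∑ h ∈ Mdeg Fq m, cubicSym Fq ζ f h) =
        ((Fintype.card Fq : ℂ) ^ m / (Fintype.card Fq : ℂ) ^ n) *
          (Gq Fq ζ p 0 f +
            ((Fintype.card Fq : ℂ) - 1) *
              (∑ V ∈ MdegLEZ Fq ((n : ℤ) - m - 2), Gq Fq ζ p V f) -
            ∑ V ∈ MdegZ Fq ((n : ℤ) - m - 1), Gq Fq ζ p V f)) ∧
    (¬ (3 ∣ n) →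
      (∑ h ∈ Mdeg Fq m, cubicSym Fq ζ f h) =
        ((Fintype.card Fq : ℂ) ^ m * (Real.sqrt (Fintype.card Fq : ℝ) : ℂ) /
            (Fintype.card Fq : ℂ) ^ n) *
          (starRingEnd ℂ)
            (((Real.sqrt (Fintype.card Fq : ℝ) : ℂ))⁻¹ *
              ∑ c : Fqˣ, cubicSym Fq ζ f (Polynomial.C (c : Fq)) * stdChar Fq p (c : Fq)) *
          ∑ V ∈ MdegZ Fq ((n : ℤ) - m - 1), Gq Fq ζ p V f) := by
  have hζ : IsPrimitiveRoot ζ 3 := IsPrimitiveRoot.iff_orderOf.2 (orderOf_eq_prime hζ3 hζ1)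
  subst hn
  have hsum := sum_Mdeg_cubicSym_eq p h3 hζ hp hf m
  refine ⟨fun h3n => ?_, fun h3n => ?_⟩
  · rw [sum_units_cubicSym_C_inv_of_three_dvd h3 hζ hf h3n,
      sum_units_stdChar_mul_cubicSym_C_inv_of_three_dvd p h3 hζ hf hp h3n] at hsum
    field_simp
    linear_combination hsum
  · rw [Gq_zero_eq_zero p h3 hζ hf h3n, sum_units_cubicSym_C_inv_eq_zero h3 hζ hf h3n,
      sum_units_stdChar_mul_cubicSym_C_inv p h3 hζ hf] at hsum
    rw [map_mul, map_inv₀, Complex.conj_ofReal]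
    field_simp
    linear_combination hsum

/-- The Poisson summation formula for the cubic residue symbols (Proposition 2.10). -/
theorem statement11 (Fq : Type) [Field Fq] [Fintype Fq]
    (hq : Odd (Fintype.card Fq)) (h3 : Fintype.card Fq % 3 = 1)
    (ζ : Fq) (hζ3 : ζ ^ 3 = 1) (hζ1 : ζ ≠ 1)
    (p : ℕ) [Fact p.Prime] [Algebra (ZMod p) Fq] (hp : p = ringChar Fq)
    (f : Polynomial Fq) (hf : f.Monic) (n : ℕ) (hn : n = f.natDegree) (hn1 : 1 ≤ n)
    (m : ℕ) (hm : 1 ≤ m) :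
    ((3 ∣ n) →
      (∑ h ∈ Mdeg Fq m, cubicSym Fq ζ f h) =
        ((Fintype.card Fq : ℂ) ^ m / (Fintype.card Fq : ℂ) ^ n) *
          (Gq Fq ζ p 0 f +
            ((Fintype.card Fq : ℂ) - 1) *
              (∑ V ∈ MdegLEZ Fq ((n : ℤ) - m - 2), Gq Fq ζ p V f) -
            ∑ V ∈ MdegZ Fq ((n : ℤ) - m - 1), Gq Fq ζ p V f)) ∧
    (¬ (3 ∣ n) →
      (∑ h ∈ Mdeg Fq m, cubicSym Fq ζ f h) =
        ((Fintype.card Fq : ℂ) ^ m * (Real.sqrt (Fintype.card Fq : ℝ) : ℂ) /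
            (Fintype.card Fq : ℂ) ^ n) *
          (starRingEnd ℂ)
            (((Real.sqrt (Fintype.card Fq : ℝ) : ℂ))⁻¹ *
              ∑ c : Fqˣ, cubicSym Fq ζ f (Polynomial.C (c : Fq)) * stdChar Fq p (c : Fq)) *
          ∑ V ∈ MdegZ Fq ((n : ℤ) - m - 1), Gq Fq ζ p V f) :=
  statement11_general Fq h3 ζ hζ3 hζ1 p hp f hf n hn m

end CubicLF
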